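/- Let 1 ≤ p₁ ≤ p₂ ≤ q < ∞. Then wℓ^{p₂}_q ⊆ wℓ^{p₁}_q, and ‖x‖_{wℓ^{p₁}_q} ≤ ‖x‖_{wℓ^{p₂}_q} for every x ∈ wℓ^{p₂}_q. -/

import Mathlib

open scoped ENNReal NNReal BigOperators

/-- The discrete "ball" `S_{m,N} = {m-N, …, m+N}` as a finite set of integers. -/
noncomputable def S (m : ℤ) (N : ℕ) : Finset ℤ := Finset.Icc (m - N) (m + N)

open Classical in
/-- The cardinality of `{k ∈ S_{m,N} : |x_k| > γ}`. -/
noncomputable def weakCard (x : ℤ → ℂ) (m : ℤ) (N : ℕ) (γ : ℝ≥0) : ℕ :=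
  ((S m N).filter (fun k => γ < ‖x k‖₊)).card

/-- The weak type discrete Morrey norm `‖x‖_{wℓ^p_q}`. -/
noncomputable def wMorreyNorm (p q : ℝ) (x : ℤ → ℂ) : ℝ≥0∞ :=
  ⨆ (m : ℤ) (N : ℕ) (γ : ℝ≥0) (_ : 0 < γ),
    (2 * (N : ℝ≥0∞) + 1) ^ (1 / q - 1 / p) * (γ : ℝ≥0∞) *
      (weakCard x m N γ : ℝ≥0∞) ^ (1 / p)

/-! Each term of the supremum is `B ^ (1/q) * γ * (c / B) ^ (1/p)` with `c = weakCard x m N γ`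
and `B = 2N + 1`. Since `c ≤ B`, the ratio `c / B` is at most `1`, so its power `1/p` can only
decrease as `p` grows. -/

theorem ENNReal.rpow_sub_mul_rpow_le_of_le {a b : ℝ≥0∞} (hab : a ≤ b) (hb₀ : b ≠ 0)
    (hb : b ≠ ⊤) {r s t : ℝ} (hs : 0 < s) (hst : s ≤ t) :
    b ^ (r - t) * a ^ t ≤ b ^ (r - s) * a ^ s := by
  rcases eq_or_ne a 0 with rfl | ha₀
  · simp [ENNReal.zero_rpow_of_pos (hs.trans_le hst)]
  have ha : a ≠ ⊤ := ne_top_of_le_ne_top hb hab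
  calc b ^ (r - t) * a ^ t = b ^ (r - t) * a ^ (t - s) * a ^ s := by
        rw [mul_assoc, ← ENNReal.rpow_add _ _ ha₀ ha, sub_add_cancel]
    _ ≤ b ^ (r - t) * b ^ (t - s) * a ^ s := by
        gcongr
    _ = b ^ (r - s) * a ^ s := by
        rw [← ENNReal.rpow_add _ _ hb₀ hb, sub_add_sub_cancel]

theorem weakCard_le (x : ℤ → ℂ) (m : ℤ) (N : ℕ) (γ : ℝ≥0) :
    (weakCard x m N γ : ℝ≥0∞) ≤ 2 * N + 1 := by
  have hS : (S m N).card = 2 * N + 1 := by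
    simp only [S, Int.card_Icc]
    omega
  have : weakCard x m N γ ≤ 2 * N + 1 := hS ▸ Finset.card_filter_le _ _
  exact_mod_cast this

theorem stmt10_general (p₁ p₂ q : ℝ) (hp₁ : 1 ≤ p₁) (hp : p₁ ≤ p₂) (x : ℤ → ℂ) :
    wMorreyNorm p₁ q x ≤ wMorreyNorm p₂ q x := by
  have hp₂ : 0 < p₂ := one_pos.trans_le (hp₁.trans hp)
  refine iSup_mono fun m => iSup_mono fun N => iSup_mono fun γ => iSup_mono fun _ => ?_
  rw [mul_right_comm, mul_right_comm _ (γ : ℝ≥0∞)]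
  gcongr ?_ * _
  exact ENNReal.rpow_sub_mul_rpow_le_of_le (weakCard_le x m N γ) (by positivity)
    (by finiteness) (by positivity) (one_div_le_one_div_of_le (by linarith) hp)

theorem stmt10 (p₁ p₂ q : ℝ) (hp₁ : 1 ≤ p₁) (hp : p₁ ≤ p₂) (hq : p₂ ≤ q) (x : ℤ → ℂ)
    (hx : wMorreyNorm p₂ q x < ⊤) :
    wMorreyNorm p₁ q x ≤ wMorreyNorm p₂ q x :=
  stmt10_general p₁ p₂ q hp₁ hp x
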